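/- A shift space X is dendric if and only if for all n ∈ ℕ the graph G^L_n(X) is acyclic for the labeling and connected. -/

import Mathlib

def shiftMap {A : Type*} (x : ℤ → A) : ℤ → A := fun n => x (n + 1)

/-- `u` occurs as a factor of the bi-infinite word `x`. -/
def FactorOf {A : Type*} (u : List A) (x : ℤ → A) : Prop :=
  ∃ i : ℤ, ∀ k : Fin u.length, x (i + ((k : ℕ) : ℤ)) = u.get k

/-- The language of a set of bi-infinite words. -/
def lang {A : Type*} (X : Set (ℤ → A)) : Set (List A) := {u | ∃ x ∈ X, FactorOf u x}

/-- A (nonempty) shift space: a nonempty, closed, shift-invariant subset of `A^ℤ`. -/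
def IsShiftSpace {A : Type*} [TopologicalSpace A] (X : Set (ℤ → A)) : Prop :=
  X.Nonempty ∧ IsClosed X ∧ shiftMap '' X = X

/-- The extension graph of the word `v` with respect to the factorial language `L`:
the bipartite graph on the left extensions and the right extensions of `v`, with an
edge between `a` (left) and `b` (right) whenever `a v b ∈ L`. -/
def extGraph {A : Type*} (L : Set (List A)) (v : List A) :
    SimpleGraph ({a : A // a :: v ∈ L} ⊕ {b : A // v ++ [b] ∈ L}) :=
  SimpleGraph.fromRel (fun p q =>
    match p, q with
    | Sum.inl a, Sum.inr b => (a.1 :: (v ++ [b.1])) ∈ L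
    | _, _ => False)

/-- In the edge-colored multigraph determined by the cliques `{v | M ℓ v}` (one clique of
color `ℓ` for each label `ℓ`), there is an edge of color `ℓ` between `x` and `y`. -/
def MEdge {Λ V : Type*} (M : Λ → V → Prop) (ℓ : Λ) (x y : V) : Prop :=
  x ≠ y ∧ M ℓ x ∧ M ℓ y

/-- A simple cycle of length `n + 2` in the colored multigraph determined by `M`:
pairwise distinct vertices `v i`, consecutive vertices joined by an edge of color `ℓ i`,
and the (undirected, colored) edges pairwise distinct. -/
def IsCycleM {Λ V : Type*} (M : Λ → V → Prop) (n : ℕ) (v : Fin (n + 2) → V)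
    (ℓ : Fin (n + 2) → Λ) : Prop :=
  Function.Injective v ∧ (∀ i, MEdge M (ℓ i) (v i) (v (i + 1))) ∧
    ∀ i j, i ≠ j → ¬(ℓ i = ℓ j ∧ ({v i, v (i + 1)} : Set V) = {v j, v (j + 1)})

/-- The colored multigraph determined by `M` is acyclic for the coloring: every simple
cycle only uses edges of a single color. -/
def AcyclicForColoring {Λ V : Type*} (M : Λ → V → Prop) : Prop :=
  ∀ n v ℓ, IsCycleM M n v ℓ → ∀ i j, ℓ i = ℓ j

/-- The colored multigraph determined by `M` is connected (on the whole vertex set `V`). -/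
def MConnected {Λ V : Type*} (M : Λ → V → Prop) : Prop :=
  ∀ x y : V, Relation.ReflTransGen (fun p q => ∃ ℓ, MEdge M ℓ p q) x y

/-- Membership predicate describing the colored multigraph `G^L_n(X)`: the label `w`
contributes the clique `E^L_X(w)` on the vertex set `A`, for each `w` of length `n`
in the language of `X`. -/
def GLmem {A : Type*} (X : Set (ℤ → A)) (n : ℕ) (w : List A) (a : A) : Prop :=
  w.length = n ∧ w ∈ lang X ∧ (a :: w) ∈ lang X

/-!
Forward direction, by induction on `n`. Dropping the last letter of the labels of a simple cycle
of `G^L_{n+1}` gives a cycle of `G^L_n`, so all labels are `u b_i` for a common `u`; the cycle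
is then a closed walk `v_0 – b_0 – v_1 – b_1 – ⋯` in the tree `E(u)` through distinct left
vertices, which forces all `b_i` to be equal. An edge of `G^L_n` labelled `w` is replaced by a
path of the connected graph `E(w)`, whose steps `a – b – a'` are edges of `G^L_{n+1}` labelled
`w b`.

Backward direction. `G^L_n` is acyclic for the labeling exactly when its letter–label incidence
graph is a forest, and `E(w)` embeds in the incidence graph of `G^L_{|w|+1}`. For connectivity,
follow a path of `G^L_{|w|+1}` between two left extensions of `w` and project its labels to
`G^L_{|w|}`: in the incidence forest of `G^L_{|w|}` the path can only move from one branch at `w`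
to another through `w` itself, that is, along labels `w b`, which are edges of `E(w)`.
-/

open Relation

section Language

variable {A : Type*} {X : Set (ℤ → A)}

theorem FactorOf.of_infix {u v : List A} {x : ℤ → A} (huv : u <:+: v) (hv : FactorOf v x) :
    FactorOf u x := by
  obtain ⟨s, t, rfl⟩ := huv
  obtain ⟨i, hi⟩ := hv
  refine ⟨i + s.length, fun k => ?_⟩
  have := hi ⟨s.length + k, by simp; omega⟩
  simp only [List.get_eq_getElem, List.append_assoc] at this ⊢
  rw [List.getElem_append_right (by simp), List.getElem_append_left (by simp)] at this
  simpa [add_assoc] using this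

theorem mem_lang_of_infix {u v : List A} (huv : u <:+: v) (hv : v ∈ lang X) : u ∈ lang X := by
  obtain ⟨x, hx, hvx⟩ := hv
  exact ⟨x, hx, hvx.of_infix huv⟩

theorem exists_cons_mem_lang {u : List A} (hu : u ∈ lang X) : ∃ a, a :: u ∈ lang X := by
  obtain ⟨x, hx, i, hi⟩ := hu
  refine ⟨x (i - 1), x, hx, i - 1, fun ⟨k, hk⟩ => ?_⟩
  cases k with
  | zero => simp
  | succ k =>
    have := hi ⟨k, by simpa using hk⟩
    simp only [List.get_eq_getElem, List.getElem_cons_succ] at this ⊢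
    rw [← this]
    congr 1
    push_cast
    ring

theorem cons_mem_lang_of_cons_append {a : A} {u v : List A} (h : a :: (u ++ v) ∈ lang X) :
    a :: u ∈ lang X :=
  mem_lang_of_infix (List.prefix_append (a :: u) v).isInfix h

end Language

namespace Fin

theorem forall_of_cyclic_step {n : ℕ} {P : Fin (n + 1) → Prop} (i : Fin (n + 1))
    (hi : P (i + 1)) (step : ∀ j, j ≠ i → P j → P (j + 1)) : ∀ j, P j := by
  suffices ∀ d : ℕ, ∀ j : Fin (n + 1), (j - (i + 1)).val = d → P j from fun j => this _ j rfl
  intro d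
  induction d with
  | zero =>
    intro j hj
    rwa [sub_eq_zero.mp (Fin.ext hj)]
  | succ d ih =>
    intro j hj
    have hne : j - (i + 1) ≠ 0 := fun h => by simp [h] at hj
    have hprev : j - 1 ≠ i := fun h => hne (by rw [← h, sub_add_cancel, sub_self])
    have := step _ hprev (ih _ (by rw [sub_right_comm, Fin.coe_sub_one, if_neg hne, hj]; rfl))
    rwa [sub_add_cancel] at this

theorem const_of_cyclic {n : ℕ} {β : Type*} {f : Fin (n + 1) → β}
    (h : ∀ i, f i = f (i + 1)) : ∀ i j, f i = f j := by
  have key : ∀ j, f j = f 0 :=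
    forall_of_cyclic_step (-1) (by simp) fun j _ hj => (h j).symm.trans hj
  exact fun i j => (key i).trans (key j).symm

end Fin

theorem Function.Injective.pair_ne_pair_succ {n : ℕ} {V : Type*} {v : Fin (n + 3) → V}
    (hv : Function.Injective v) {i j : Fin (n + 3)} (hij : i ≠ j) :
    ({v i, v (i + 1)} : Set V) ≠ {v j, v (j + 1)} := by
  rw [Ne, Set.pair_eq_pair_iff]
  rintro (⟨h, -⟩ | ⟨h₁, h₂⟩)
  · exact hij (hv h)
  · have h2 : (1 + 1 : Fin (n + 3)) = 0 :=
      add_left_cancel (a := j) (by rw [← add_assoc, ← hv h₁, hv h₂, add_zero])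
    rw [Fin.ext_iff, Fin.val_add, Fin.val_one, Nat.mod_eq_of_lt (by omega)] at h2
    exact absurd h2 (by simp)

namespace SimpleGraph

variable {α β : Type*}

def bipartiteOfRel (r : α → β → Prop) : SimpleGraph (α ⊕ β) :=
  fromRel fun p q =>
    match p, q with
    | Sum.inl a, Sum.inr b => r a b
    | _, _ => False

variable {r : α → β → Prop}

@[simp]
theorem bipartiteOfRel_adj_inl_inr {a : α} {b : β} :
    (bipartiteOfRel r).Adj (.inl a) (.inr b) ↔ r a b := by
  simp [bipartiteOfRel]

@[simp]
theorem bipartiteOfRel_adj_inr_inl {a : α} {b : β} :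
    (bipartiteOfRel r).Adj (.inr b) (.inl a) ↔ r a b := by
  simp [bipartiteOfRel]

@[simp]
theorem bipartiteOfRel_not_adj_inl_inl {a a' : α} :
    ¬(bipartiteOfRel r).Adj (.inl a) (.inl a') := by
  simp [bipartiteOfRel]

@[simp]
theorem bipartiteOfRel_not_adj_inr_inr {b b' : β} :
    ¬(bipartiteOfRel r).Adj (.inr b) (.inr b') := by
  simp [bipartiteOfRel]

theorem reflTransGen_of_bipartiteOfRel_reachable {a a' : α}
    (h : (bipartiteOfRel r).Reachable (.inl a) (.inl a')) :
    ReflTransGen (fun x x' => ∃ b, r x b ∧ r x' b) a a' := by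
  let R := ReflTransGen (fun x x' => ∃ b, r x b ∧ r x' b) a
  suffices ∀ p, ReflTransGen (bipartiteOfRel r).Adj (.inl a) p →
      Sum.elim R (fun b => ∃ x, R x ∧ r x b) p from
    this _ ((reachable_iff_reflTransGen _ _).mp h)
  intro p hp
  induction hp with
  | refl => exact ReflTransGen.refl
  | @tail q p _ hqp ih =>
    rcases q with x | b <;> rcases p with x' | b' <;> simp at hqp
    · exact ⟨x, ih, hqp⟩
    · obtain ⟨x, hx, hxb⟩ := ih
      exact hx.tail ⟨b, hxb, hqp⟩

theorem bipartiteOfRel_isLeft_getVert_iff {x : α} {v : α ⊕ β}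
    (c : (bipartiteOfRel r).Walk (.inl x) v) {i : ℕ} (hi : i ≤ c.length) :
    (c.getVert i).isLeft ↔ Even i := by
  let col : (bipartiteOfRel r).Coloring Bool :=
    Coloring.mk Sum.isLeft (by rintro (a | b) (a' | b') h <;> simp_all)
  have := col.even_length_iff_congr (c.take i)
  rw [Walk.take_length, min_eq_left hi] at this
  simp [this, col, Coloring.mk]

theorem bipartiteOfRel_exists_alternating_of_isCycle {x : α}
    {c : (bipartiteOfRel r).Walk (.inl x) (.inl x)} (hc : c.IsCycle) :
    ∃ (m : ℕ) (a : Fin (m + 2) → α) (b : Fin (m + 2) → β), Function.Injective a ∧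
      Function.Injective b ∧ ∀ i, r (a i) (b i) ∧ r (a (i + 1)) (b i) := by
  have hpar := fun i (hi : i ≤ c.length) => bipartiteOfRel_isLeft_getVert_iff c hi
  obtain ⟨m, hm⟩ : ∃ m, c.length = 2 * (m + 2) := by
    obtain ⟨k, hk⟩ := (hpar _ le_rfl).mp (by simp)
    have := hc.three_le_length
    exact ⟨k - 2, by omega⟩
  have hL : ∀ i : Fin (m + 2), ∃ a, c.getVert (2 * i) = .inl a := fun i =>
    Sum.isLeft_iff.mp ((hpar _ (by omega)).mpr (even_two_mul _))
  have hR : ∀ i : Fin (m + 2), ∃ b, c.getVert (2 * i + 1) = .inr b := fun i =>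
    Sum.isRight_iff.mp (by
      rw [← Sum.not_isLeft, hpar _ (by omega)]
      simp [parity_simps])
  choose a ha using hL
  choose b hb using hR
  have hwrap : ∀ i : Fin (m + 2), c.getVert (2 * i + 2) = .inl (a (i + 1)) := by
    intro i
    rw [← ha, Fin.val_add_one]
    split_ifs with hlast
    · rw [hlast, Fin.val_last, show 2 * (m + 1) + 2 = c.length by omega, Walk.getVert_length]
      simp
    · rfl
  have hinj : ∀ i j, i ≤ c.length - 1 → j ≤ c.length - 1 → c.getVert i = c.getVert j → i = j :=
    fun _ _ hi hj => hc.getVert_injOn' hi hj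
  refine ⟨m, a, b, fun i j h => ?_, fun i j h => ?_, fun i => ⟨?_, ?_⟩⟩
  · have := hinj _ _ (by omega) (by omega) ((ha i).trans (h ▸ (ha j).symm))
    omega
  · have := hinj _ _ (by omega) (by omega) ((hb i).trans (h ▸ (hb j).symm))
    omega
  · simpa [ha, hb] using c.adj_getVert_succ (i := 2 * i) (by omega)
  · simpa [hb, hwrap] using c.adj_getVert_succ (i := 2 * i + 1) (by omega)

theorem bipartiteOfRel_isAcyclic
    (H : ∀ (m : ℕ) (a : Fin (m + 2) → α) (b : Fin (m + 2) → β), Function.Injective a →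
      Function.Injective b → (∀ i, r (a i) (b i) ∧ r (a (i + 1)) (b i)) → False) :
    (bipartiteOfRel r).IsAcyclic := by
  classical
  intro v c hc
  obtain ⟨x, hx⟩ : ∃ x, Sum.inl x ∈ c.support := by
    have hadj := c.adj_getVert_succ (i := 0) (by have := hc.three_le_length; omega)
    rcases h₀ : c.getVert 0 with x | b
    · exact ⟨x, h₀ ▸ c.getVert_mem_support 0⟩
    · rcases h₁ : c.getVert (0 + 1) with x | b'
      · exact ⟨x, h₁ ▸ c.getVert_mem_support _⟩
      · simp [h₀, h₁] at hadj
  obtain ⟨m, a, b, ha, hb, hab⟩ := bipartiteOfRel_exists_alternating_of_isCycle (hc.rotate hx)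
  exact H m a b ha hb hab

theorem IsAcyclic.eq_of_reflTransGen_avoid {V : Type*} {G : SimpleGraph V} (hG : G.IsAcyclic)
    {x y z : V} (hx : G.Adj z x) (hy : G.Adj z y)
    (h : ReflTransGen (fun p q => G.Adj p q ∧ p ≠ z ∧ q ≠ z) y x) : x = y := by
  by_contra hxy
  apply isBridge_iff.mp (isAcyclic_iff_forall_adj_isBridge.mp hG hx)
  have hzy : (G.deleteEdges {s(z, x)}).Adj z y := by
    simp [hy, Ne.symm hxy, hy.ne']
  refine hzy.reachable.trans ((reachable_iff_reflTransGen _ _).mpr (ReflTransGen.mono ?_ _ _ h))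
  rintro p q ⟨hpq, hp, hq⟩
  simp [hpq, hp, hq]

theorem IsAcyclic.const_of_alternating {V : Type*} {G : SimpleGraph V} (hG : G.IsAcyclic)
    {n : ℕ} {a b : Fin (n + 2) → V} (ha : Function.Injective a) (hab : ∀ i j, a i ≠ b j)
    (h₁ : ∀ i, G.Adj (a i) (b i)) (h₂ : ∀ i, G.Adj (b i) (a (i + 1))) :
    ∀ i j, b i = b j := by
  refine Fin.const_of_cyclic fun i => ?_
  by_contra hne
  apply isBridge_iff.mp (isAcyclic_iff_forall_adj_isBridge.mp hG (h₂ i))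
  have hreach : ∀ j, (G.deleteEdges {s(b i, a (i + 1))}).Reachable (a (i + 1)) (a j) := by
    refine Fin.forall_of_cyclic_step i (Reachable.refl _) fun j hji hj => ?_
    have e₁ : (G.deleteEdges {s(b i, a (i + 1))}).Adj (a j) (b j) := by
      simp only [deleteEdges_adj, h₁ j, Set.mem_singleton_iff, Sym2.eq, Sym2.rel_iff',
        Prod.mk.injEq, hab, false_and, Prod.swap_prod_mk, ha.eq_iff, false_or, not_and, true_and]
      rintro rfl
      exact Ne.symm hne
    have e₂ : (G.deleteEdges {s(b i, a (i + 1))}).Adj (b j) (a (j + 1)) := by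
      simp [h₂ j, hab, ha.eq_iff, hji]
    exact hj.trans (e₁.reachable.trans e₂.reachable)
  have e : (G.deleteEdges {s(b i, a (i + 1))}).Adj (b i) (a i) := by
    simp [(h₁ i).symm, hab, ha.eq_iff]
  exact e.reachable.trans (hreach i).symm

end SimpleGraph

section ColoredMultigraph

variable {Λ V : Type*} {M : Λ → V → Prop}

theorem reflTransGen_mEdge_of_mem {ℓ : Λ} {x y : V} (hx : M ℓ x) (hy : M ℓ y) :
    ReflTransGen (fun p q => ∃ ℓ, MEdge M ℓ p q) x y := by
  rcases eq_or_ne x y with rfl | hxy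
  · exact .refl
  · exact .single ⟨ℓ, hxy, hx, hy⟩

theorem acyclicForColoring_iff :
    AcyclicForColoring M ↔ ∀ (n : ℕ) (v : Fin (n + 2) → V) (ℓ : Fin (n + 2) → Λ),
      Function.Injective v → (∀ i, MEdge M (ℓ i) (v i) (v (i + 1))) → ∀ i j, ℓ i = ℓ j := by
  refine ⟨fun h n v ℓ hv hM => ?_, fun h n v ℓ hc => h n v ℓ hc.1 hc.2.1⟩
  by_contra! ⟨i₀, j₀, hij₀⟩
  -- Distinctness of the colored edges is automatic once two labels differ: consecutive vertex
  -- pairs differ on cycles of length at least 3, and on a 2-cycle the two labels differ.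
  refine hij₀ (h n v ℓ ⟨hv, hM, fun i j hij ⟨hℓ, hpair⟩ => ?_⟩ i₀ j₀)
  rcases n with _ | n
  · have hconst : ∀ k, ℓ k = ℓ i := fun k => by
      rcases (by omega : k = i ∨ k = j) with rfl | rfl
      exacts [rfl, hℓ.symm]
    exact hij₀ ((hconst i₀).trans (hconst j₀).symm)
  · exact hv.pair_ne_pair_succ hij hpair

theorem AcyclicForColoring.false_of_injective (h : AcyclicForColoring M) {n : ℕ}
    {v : Fin (n + 2) → V} {ℓ : Fin (n + 2) → Λ} (hv : Function.Injective v)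
    (hℓ : Function.Injective ℓ) (hM : ∀ i, M (ℓ i) (v i) ∧ M (ℓ i) (v (i + 1))) : False := by
  have h01 := acyclicForColoring_iff.mp h n v ℓ hv
    (fun i => ⟨hv.ne (by simp), (hM i).1, (hM i).2⟩) 0 1
  exact absurd (hℓ h01) (by simp)

abbrev incidenceGraph (M : Λ → V → Prop) : SimpleGraph (V ⊕ Λ) :=
  SimpleGraph.bipartiteOfRel fun v ℓ => M ℓ v

theorem AcyclicForColoring.incidenceGraph_isAcyclic (h : AcyclicForColoring M) :
    (incidenceGraph M).IsAcyclic :=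
  SimpleGraph.bipartiteOfRel_isAcyclic fun _ _ _ hv hℓ hM => h.false_of_injective hv hℓ hM

end ColoredMultigraph

section Dendric

open SimpleGraph

variable {A : Type*} {X : Set (ℤ → A)}

theorem extGraph_eq_bipartiteOfRel (L : Set (List A)) (v : List A) :
    extGraph L v = bipartiteOfRel (fun a b => a.1 :: (v ++ [b.1]) ∈ L) := by
  ext (a | b) (a' | b') <;> simp [extGraph, bipartiteOfRel]

@[simp]
theorem extGraph_adj_inl_inr {L : Set (List A)} {v : List A} {a : {a // a :: v ∈ L}}
    {b : {b // v ++ [b] ∈ L}} :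
    (extGraph L v).Adj (.inl a) (.inr b) ↔ a.1 :: (v ++ [b.1]) ∈ L := by
  simp [extGraph_eq_bipartiteOfRel]

@[simp]
theorem extGraph_adj_inr_inl {L : Set (List A)} {v : List A} {a : {a // a :: v ∈ L}}
    {b : {b // v ++ [b] ∈ L}} :
    (extGraph L v).Adj (.inr b) (.inl a) ↔ a.1 :: (v ++ [b.1]) ∈ L := by
  simp [extGraph_eq_bipartiteOfRel]

theorem GLmem.of_append_singleton {n : ℕ} {u : List A} {a b : A}
    (h : GLmem X (n + 1) (u ++ [b]) a) : GLmem X n u a :=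
  ⟨by simpa using h.1, mem_lang_of_infix (List.prefix_append u [b]).isInfix h.2.1,
    cons_mem_lang_of_cons_append h.2.2⟩

theorem GLmem.exists_eq_append_singleton {n : ℕ} {w : List A} {a : A}
    (h : GLmem X (n + 1) w a) : ∃ u b, w = u ++ [b] :=
  (List.eq_nil_or_concat' w).resolve_left fun hw => by simpa [hw] using h.1

theorem mconnected_GLmem_of_connected (hover : ∀ a : A, [a] ∈ lang X)
    (hconn : ∀ v ∈ lang X, (extGraph (lang X) v).Connected) : ∀ n, MConnected (GLmem X n)
  | 0 => fun x y =>
    have hnil : [] ∈ lang X := mem_lang_of_infix List.nil_infix (hover x)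
    reflTransGen_mEdge_of_mem (ℓ := []) ⟨rfl, hnil, hover x⟩ ⟨rfl, hnil, hover y⟩
  | n + 1 => fun x y => by
    refine (mconnected_GLmem_of_connected hover hconn n x y).lift' id
      fun p q ⟨w, _, hp, hq⟩ => ?_
    have hreach := (hconn w hp.2.1).preconnected (.inl ⟨p, hp.2.2⟩) (.inl ⟨q, hq.2.2⟩)
    rw [extGraph_eq_bipartiteOfRel] at hreach
    refine (reflTransGen_of_bipartiteOfRel_reachable hreach).lift' Subtype.val
      fun c c' ⟨b, hcb, hc'b⟩ => ?_
    exact reflTransGen_mEdge_of_mem (ℓ := w ++ [b.1]) ⟨by simp [hp.1], b.2, hcb⟩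
      ⟨by simp [hp.1], b.2, hc'b⟩

theorem const_of_extGraph_isAcyclic {u : List A} (hu : (extGraph (lang X) u).IsAcyclic)
    {m : ℕ} {v b : Fin (m + 2) → A} (hv : Function.Injective v)
    (h₁ : ∀ i, v i :: (u ++ [b i]) ∈ lang X) (h₂ : ∀ i, v (i + 1) :: (u ++ [b i]) ∈ lang X) :
    ∀ i j, b i = b j := by
  have hb : ∀ i, u ++ [b i] ∈ lang X := fun i =>
    mem_lang_of_infix (List.suffix_cons _ _).isInfix (h₁ i)
  have hconst := hu.const_of_alternating
    (a := fun i => .inl ⟨v i, cons_mem_lang_of_cons_append (h₁ i)⟩)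
    (b := fun i => .inr ⟨b i, hb i⟩)
    (fun i j hij => hv (by simpa using hij)) (by simp) (fun i => by simpa using h₁ i)
    (fun i => by simpa using h₂ i)
  exact fun i j => by simpa using hconst i j

theorem acyclicForColoring_GLmem_of_isAcyclic
    (hacyc : ∀ v ∈ lang X, (extGraph (lang X) v).IsAcyclic) :
    ∀ n, AcyclicForColoring (GLmem X n)
  | 0 => acyclicForColoring_iff.mpr fun _ _ ℓ _ hM i j => by
    rw [List.eq_nil_of_length_eq_zero (hM i).2.1.1, List.eq_nil_of_length_eq_zero (hM j).2.1.1]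
  | n + 1 => acyclicForColoring_iff.mpr fun m v ℓ hv hM => by
    choose u b hub using fun i => (hM i).2.1.exists_eq_append_singleton
    have hGL : ∀ i, MEdge (GLmem X n) (u i) (v i) (v (i + 1)) := fun i =>
      ⟨(hM i).1, (hub i ▸ (hM i).2.1).of_append_singleton,
        (hub i ▸ (hM i).2.2).of_append_singleton⟩
    have hu := acyclicForColoring_iff.mp (acyclicForColoring_GLmem_of_isAcyclic hacyc n)
      m v u hv hGL
    have hb := const_of_extGraph_isAcyclic (hacyc _ (hGL 0).2.1.2.1) hv (b := b)
      (fun i => hu i 0 ▸ hub i ▸ (hM i).2.1.2.2) (fun i => hu i 0 ▸ hub i ▸ (hM i).2.2.2.2)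
    intro i j
    rw [hub i, hub j, hu i j, hb i j]

theorem extGraph_isAcyclic {w : List A} (h : AcyclicForColoring (GLmem X (w.length + 1))) :
    (extGraph (lang X) w).IsAcyclic := by
  rw [extGraph_eq_bipartiteOfRel]
  refine bipartiteOfRel_isAcyclic fun _ a b ha hb hab => h.false_of_injective
    (v := fun i => (a i).1) (ℓ := fun i => w ++ [(b i).1]) (Subtype.val_injective.comp ha)
    (fun i j hij => hb (Subtype.ext (by simpa using hij))) fun i => ?_
  exact ⟨⟨by simp, (b i).2, (hab i).1⟩, ⟨by simp, (b i).2, (hab i).2⟩⟩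

theorem extGraph_reachable_inl {w : List A} (hw : w ∈ lang X)
    (hac : AcyclicForColoring (GLmem X w.length)) (hconn : MConnected (GLmem X (w.length + 1)))
    (a a' : {c // c :: w ∈ lang X}) : (extGraph (lang X) w).Reachable (.inl a) (.inl a') := by
  have hT := hac.incidenceGraph_isAcyclic
  have hTw : ∀ {c}, c :: w ∈ lang X →
      (incidenceGraph (GLmem X w.length)).Adj (.inr w) (.inl c) :=
    fun hc => by simpa using ⟨rfl, hw, hc⟩
  -- `c₀` is the left extension of `w` whose branch at `w`, in the incidence forest, contains `c`.
  suffices ∀ c, ReflTransGen (fun p q => ∃ ℓ, MEdge (GLmem X (w.length + 1)) ℓ p q) a.1 c →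
      ∃ c₀ : {c // c :: w ∈ lang X}, (extGraph (lang X) w).Reachable (.inl a) (.inl c₀) ∧
        ReflTransGen (fun p q => (incidenceGraph (GLmem X w.length)).Adj p q ∧
          p ≠ .inr w ∧ q ≠ .inr w) (.inl c₀.1) (.inl c) by
    obtain ⟨c₀, hreach, havoid⟩ := this a'.1 (hconn _ _)
    rwa [Subtype.ext (Sum.inl_injective
      (hT.eq_of_reflTransGen_avoid (hTw a'.2) (hTw c₀.2) havoid))]
  intro c hc
  induction hc with
  | refl => exact ⟨a, .refl _, .refl⟩
  | @tail c d _ hstep ih =>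
    obtain ⟨c₀, hreach, havoid⟩ := ih
    obtain ⟨ℓ, -, hc, hd⟩ := hstep
    obtain ⟨u, b, rfl⟩ := hc.exists_eq_append_singleton
    by_cases huw : u = w
    · subst huw
      obtain rfl : c = c₀.1 := Sum.inl_injective
        (hT.eq_of_reflTransGen_avoid (hTw hc.of_append_singleton.2.2) (hTw c₀.2) havoid)
      refine ⟨⟨d, hd.of_append_singleton.2.2⟩, hreach.trans ?_, .refl⟩
      have hb : u ++ [b] ∈ lang X := hc.2.1
      exact (Adj.reachable (v := .inr ⟨b, hb⟩) (by simpa using hc.2.2)).trans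
        (Adj.reachable (by simpa using hd.2.2))
    · have hne : (Sum.inr u : A ⊕ List A) ≠ .inr w := Sum.inr_injective.ne huw
      refine ⟨c₀, hreach, (havoid.tail ⟨?_, Sum.inl_ne_inr, hne⟩).tail
        ⟨?_, hne, Sum.inl_ne_inr⟩⟩
      · simpa using hc.of_append_singleton
      · simpa using hd.of_append_singleton

theorem extGraph_connected {w : List A} (hw : w ∈ lang X)
    (hac : AcyclicForColoring (GLmem X w.length)) (hconn : MConnected (GLmem X (w.length + 1))) :
    (extGraph (lang X) w).Connected := by
  obtain ⟨a₀, ha₀⟩ := exists_cons_mem_lang hw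
  have : Nonempty ({a // a :: w ∈ lang X} ⊕ {b // w ++ [b] ∈ lang X}) :=
    ⟨.inl ⟨a₀, ha₀⟩⟩
  have toLeft : ∀ p, ∃ a, (extGraph (lang X) w).Reachable p (.inl a) := by
    rintro (a | ⟨b, hb⟩)
    · exact ⟨a, .refl _⟩
    · obtain ⟨a, hab⟩ := exists_cons_mem_lang hb
      exact ⟨⟨a, cons_mem_lang_of_cons_append hab⟩, Adj.reachable (by simpa using hab)⟩
  refine ⟨fun p q => ?_⟩
  obtain ⟨a, hp⟩ := toLeft p
  obtain ⟨a', hq⟩ := toLeft q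
  exact hp.trans ((extGraph_reachable_inl hw hac hconn a a').trans hq.symm)

end Dendric

theorem stmt_14_general {A : Type*}
    (X : Set (ℤ → A)) (hover : ∀ a : A, [a] ∈ lang X) :
    (∀ v ∈ lang X, (extGraph (lang X) v).IsTree)
      ↔ ∀ n : ℕ, AcyclicForColoring (GLmem X n) ∧ MConnected (GLmem X n) :=
  ⟨fun h n => ⟨acyclicForColoring_GLmem_of_isAcyclic (fun v hv => (h v hv).isAcyclic) n,
      mconnected_GLmem_of_connected hover (fun v hv => (h v hv).connected) n⟩,
    fun h _ hv => ⟨extGraph_connected hv (h _).1 (h _).2, extGraph_isAcyclic (h _).1⟩⟩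

/-- A shift space `X` is dendric (every extension graph is a tree) if and only if for
all `n ∈ ℕ` the graph `G^L_n(X)` is acyclic for the labeling and connected. -/
theorem stmt_14 {A : Type*} [Fintype A] [TopologicalSpace A] [DiscreteTopology A]
    (X : Set (ℤ → A)) (hX : IsShiftSpace X) (hover : ∀ a : A, [a] ∈ lang X) :
    (∀ v ∈ lang X, (extGraph (lang X) v).IsTree)
      ↔ ∀ n : ℕ, AcyclicForColoring (GLmem X n) ∧ MConnected (GLmem X n) :=
  stmt_14_general X hover
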